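/- arXiv:1803.03219 — 4 statements merged into one kernel-verified Lean document; each statement's English description precedes it below -/
import Mathlib

section
/- For real μ ≠ 0 and real θ with 0 < θ, the integral over z ∈ ℝ of Γ(θ+iz)·Γ(θ−iz)·|μ|^(−(θ+iz)) dz equals 2π·Γ(2θ)·(1+|μ|)^(−2θ). (This is a special case of Barnes's integral for the hypergeometric function ₂F₁, and is the inverse Mellin transform of the Euler beta function.) -/
open MeasureTheory Set Complex Real
open MeasureTheory Set Complex Real
open MeasureTheory Set Complex Real

lemma norm_Gamma_le {s : ℂ} (hs : 0 < s.re) : ‖Complex.Gamma s‖ ≤ Real.Gamma s.re := by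
  rw [Complex.Gamma_eq_integral hs, Real.Gamma_eq_integral hs]
  refine (norm_integral_le_integral_norm _).trans_eq ?_
  refine setIntegral_congr_fun measurableSet_Ioi (fun x hx => ?_)
  rw [norm_mul,
    Complex.norm_cpow_eq_rpow_re_of_pos hx, Complex.norm_real, Real.norm_eq_abs,
    _root_.abs_of_nonneg (Real.exp_nonneg _)]
  simp

lemma ne_neg_nat {s : ℂ} (hs : 0 < s.re) : ∀ m : ℕ, s ≠ -m := by
  intro m h
  rw [h] at hs
  simp at hs
  nlinarith [hs, Nat.cast_nonneg (α := ℝ) m]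

lemma norm_Gamma_bound {θ : ℝ} (hθ : 0 < θ) (z : ℝ) :
    ‖Complex.Gamma ((θ:ℂ) + z * I)‖ ≤ Real.Gamma (θ + 2) / (θ * Real.sqrt (1 + z^2)) := by
  set s : ℂ := (θ:ℂ) + z * I with hsdef
  have hre : s.re = θ := by simp [hsdef]
  have hs0 : s ≠ 0 := fun h => by rw [h] at hre; simp at hre; linarith
  have hs1 : s + 1 ≠ 0 := fun h => by
    have : (s+1).re = θ + 1 := by simp [hsdef]
    rw [h] at this; simp at this; linarith
  have key : Complex.Gamma (s + 2) = (s+1) * s * Complex.Gamma s := by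
    have h1 : s + 2 = (s + 1) + 1 := by ring
    rw [h1, Complex.Gamma_add_one _ hs1, Complex.Gamma_add_one _ hs0]
    ring
  have hn2 : ‖Complex.Gamma (s+2)‖ ≤ Real.Gamma (θ + 2) := by
    have h2 : (s+2).re = θ + 2 := by simp [hsdef]
    have := norm_Gamma_le (s := s+2) (by rw [h2]; linarith)
    rwa [h2] at this
  rw [key, norm_mul, norm_mul] at hn2
  have hns : θ ≤ ‖s‖ := by
    have := Complex.abs_re_le_norm s
    rw [hre] at this
    exact le_trans (le_abs_self θ) this
  have hns1 : Real.sqrt (1 + z^2) ≤ ‖s + 1‖ := by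
    rw [Complex.norm_def]
    refine Real.sqrt_le_sqrt ?_
    have : Complex.normSq (s+1) = (θ+1)^2 + z^2 := by
      simp [hsdef, Complex.normSq_apply]; ring
    rw [this]; nlinarith
  have hpos : 0 < θ * Real.sqrt (1 + z^2) := by positivity
  rw [le_div_iff₀ hpos]
  have h1 : 0 ≤ ‖Complex.Gamma s‖ := norm_nonneg _
  have h2 : 0 < Real.sqrt (1 + z^2) := by positivity
  have hprod : θ * Real.sqrt (1+z^2) ≤ ‖s‖ * ‖s+1‖ := mul_le_mul hns hns1 h2.le (norm_nonneg s)
  nlinarith [mul_le_mul_of_nonneg_left hprod h1]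

lemma cont_gamma_line {θ : ℝ} (hθ : 0 < θ) :
    Continuous (fun z : ℝ => Complex.Gamma ((θ:ℂ) + z * I)) := by
  rw [continuous_iff_continuousAt]
  intro z
  have hl : Continuous (fun z : ℝ => ((θ:ℂ) + z * I)) := by continuity
  refine ContinuousAt.comp ?_ hl.continuousAt
  refine (Complex.differentiableAt_Gamma _ (ne_neg_nat ?_)).continuousAt
  simp [hθ]

lemma gamma_decay {θ : ℝ} (hθ : 0 < θ) :
    MeasureTheory.Integrable (fun z : ℝ =>
      Complex.Gamma ((θ:ℂ) + z * I) * Complex.Gamma ((θ:ℂ) - z * I)) := by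
  have hcont : Continuous (fun z : ℝ =>
      Complex.Gamma ((θ:ℂ) + z * I) * Complex.Gamma ((θ:ℂ) - z * I)) := by
    have h2 : Continuous (fun z : ℝ => Complex.Gamma ((θ:ℂ) - z * I)) := by
      rw [continuous_iff_continuousAt]
      intro z
      have hl : Continuous (fun z : ℝ => ((θ:ℂ) - z * I)) := by continuity
      refine ContinuousAt.comp ?_ hl.continuousAt
      refine (Complex.differentiableAt_Gamma _ (ne_neg_nat ?_)).continuousAt
      simp [hθ]
    exact (cont_gamma_line hθ).mul h2
  refine Integrable.mono' (g := fun z : ℝ => (Real.Gamma (θ+2)/θ)^2 * (1+z^2)⁻¹)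
    ((integrable_inv_one_add_sq).const_mul _) hcont.aestronglyMeasurable ?_
  refine Filter.Eventually.of_forall (fun z => ?_)
  rw [norm_mul]
  have h1 := norm_Gamma_bound hθ z
  have h2 : ‖Complex.Gamma ((θ:ℂ) - z * I)‖ ≤ Real.Gamma (θ + 2) / (θ * Real.sqrt (1 + z^2)) := by
    have := norm_Gamma_bound hθ (-z)
    have he : ((θ:ℂ) + (-z : ℝ) * I) = (θ:ℂ) - z * I := by push_cast; ring
    rw [he] at this
    simpa [neg_sq] using this
  have hsq : Real.sqrt (1+z^2) * Real.sqrt (1+z^2) = 1 + z^2 :=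
    Real.mul_self_sqrt (by positivity)
  have hG : 0 ≤ Real.Gamma (θ+2) := Real.Gamma_nonneg_of_nonneg (by linarith)
  calc ‖Complex.Gamma ((θ:ℂ) + z * I)‖ * ‖Complex.Gamma ((θ:ℂ) - z * I)‖
      ≤ (Real.Gamma (θ+2) / (θ * Real.sqrt (1+z^2))) *
        (Real.Gamma (θ+2) / (θ * Real.sqrt (1+z^2))) :=
        mul_le_mul h1 h2 (norm_nonneg _) (by positivity)
    _ = (Real.Gamma (θ+2)/θ)^2 * (1+z^2)⁻¹ := by
        field_simp
        rw [Real.sq_sqrt (by positivity)]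
open MeasureTheory Set Complex Real

noncomputable def phi0 (t : ℝ) : ℝ := t / (1 - t)

lemma phi0_deriv : ∀ t ∈ Ioo (0:ℝ) 1,
    HasDerivWithinAt phi0 (((1-t)^2)⁻¹) (Ioo (0:ℝ) 1) t := by
  intro t ht
  have hb : (1:ℝ) - t ≠ 0 := by rw [sub_ne_zero]; exact fun h => (h ▸ ht.2).false
  have := (hasDerivAt_id t).div ((hasDerivAt_id t).const_sub 1) hb
  convert this.hasDerivWithinAt using 1
  · rfl
  · rfl
  · rfl
  · simp only [id]; rw [inv_eq_one_div]; congr 1; ring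

lemma phi0_image : phi0 '' Ioo 0 1 = Ioi (0:ℝ) := by
  ext x
  constructor
  · rintro ⟨t, ht, rfl⟩
    exact div_pos ht.1 (by linarith [ht.2])
  · intro hx
    have hx0 : 0 < x := hx
    refine ⟨x / (1 + x), ⟨div_pos hx0 (by linarith), ?_⟩, ?_⟩
    · rw [div_lt_one (by linarith)]; linarith
    · have h1 : (1:ℝ) + x ≠ 0 := by linarith
      unfold phi0
      field_simp
      ring

lemma phi0_inj : InjOn phi0 (Ioo 0 1) := by
  intro t1 h1 t2 h2 h
  have hb1 : (1:ℝ) - t1 ≠ 0 := by have := h1.2; intro hc; linarith [sub_eq_zero.mp hc]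
  have hb2 : (1:ℝ) - t2 ≠ 0 := by have := h2.2; intro hc; linarith [sub_eq_zero.mp hc]
  unfold phi0 at h
  field_simp at h
  linarith

lemma key_fun_eq (θ : ℝ) (s : ℂ) : ∀ t ∈ Ioo (0:ℝ) 1,
    |((1-t)^2)⁻¹| • (((phi0 t : ℝ) : ℂ)^(s-1) • ((1 : ℂ) + (phi0 t : ℝ))^(-(2*(θ:ℂ))))
      = (t:ℂ)^(s-1) * ((1:ℂ)-t)^(2*(θ:ℂ)-s-1) := by
  intro t ht
  have ha : (0:ℝ) < t := ht.1
  have hb : (0:ℝ) < 1 - t := by linarith [ht.2]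
  have hcast : ((1 - t : ℝ) : ℂ) = 1 - (t:ℂ) := by push_cast; ring
  have hbC : ((1 - t : ℝ) : ℂ) ≠ 0 := by exact_mod_cast hb.ne'
  have harg : ((1 - t : ℝ) : ℂ).arg ≠ π := by
    rw [Complex.arg_ofReal_of_nonneg hb.le]
    exact Real.pi_ne_zero.symm
  have h2 : (1:ℂ) + (phi0 t : ℝ) = (((1-t)⁻¹ : ℝ) : ℂ) := by
    have : (1:ℝ) + phi0 t = (1-t)⁻¹ := by unfold phi0; field_simp; ring
    rw [← this]; push_cast; ring
  have h3 : ((phi0 t : ℝ):ℂ)^(s-1) = (t:ℂ)^(s-1) * ((1-t:ℝ):ℂ)^(-(s-1)) := by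
    unfold phi0
    rw [div_eq_mul_inv, Complex.ofReal_mul,
      Complex.mul_cpow_ofReal_nonneg ha.le (inv_nonneg.2 hb.le), Complex.ofReal_inv,
      Complex.inv_cpow _ _ harg, ← Complex.cpow_neg]
  have h4 : (((1-t)⁻¹:ℝ):ℂ)^(-(2*(θ:ℂ))) = ((1-t:ℝ):ℂ)^(2*(θ:ℂ)) := by
    rw [Complex.ofReal_inv, Complex.inv_cpow _ _ harg, ← Complex.cpow_neg, neg_neg]
  have h6 : ((((1-t)^2)⁻¹ : ℝ):ℂ) = ((1-t:ℝ):ℂ)^(-2:ℂ) := by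
    rw [show (-2:ℂ) = -((2:ℕ):ℂ) by norm_num, Complex.cpow_neg, Complex.cpow_natCast]
    push_cast
    ring
  rw [h2, h3, h4, _root_.abs_of_pos (by positivity), smul_eq_mul, Complex.real_smul, h6, ← hcast]
  calc ((1-t:ℝ):ℂ)^(-2:ℂ) * ((t:ℂ)^(s-1) * ((1-t:ℝ):ℂ)^(-(s-1)) * ((1-t:ℝ):ℂ)^(2*(θ:ℂ)))
      = (t:ℂ)^(s-1) * (((1-t:ℝ):ℂ)^(-(s-1)) * ((1-t:ℝ):ℂ)^(2*(θ:ℂ)) * ((1-t:ℝ):ℂ)^(-2:ℂ)) := by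
        ring
    _ = (t:ℂ)^(s-1) * ((1-t:ℝ):ℂ)^(2*(θ:ℂ)-s-1) := by
        rw [← Complex.cpow_add _ _ hbC, ← Complex.cpow_add _ _ hbC]
        congr 1
        ring

lemma beta_integrableOn {θ : ℝ} (hθ : 0 < θ) {s : ℂ} (hs1 : 0 < s.re) (hs2 : s.re < 2*θ) :
    IntegrableOn (fun t : ℝ => (t:ℂ)^(s-1) * ((1:ℂ)-t)^(2*(θ:ℂ)-s-1)) (Ioo 0 1) := by
  have h := Complex.betaIntegral_convergent (u := s) (v := 2*(θ:ℂ) - s) hs1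
    (by simp [Complex.sub_re]; linarith)
  rw [intervalIntegrable_iff_integrableOn_Ioc_of_le zero_le_one] at h
  exact h.mono_set Ioo_subset_Ioc_self

lemma mellin_conv {θ : ℝ} (hθ : 0 < θ) :
    MellinConvergent (fun x : ℝ => ((1:ℂ)+x)^(-(2*(θ:ℂ)))) (θ:ℂ) := by
  unfold MellinConvergent
  rw [← phi0_image, integrableOn_image_iff_integrableOn_abs_deriv_smul
    measurableSet_Ioo phi0_deriv phi0_inj]
  exact (beta_integrableOn hθ (s := (θ:ℂ)) (by simp [hθ]) (by simp; linarith)).congr_fun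
    (fun t ht => (key_fun_eq θ (θ:ℂ) t ht).symm) measurableSet_Ioo

lemma mellin_val {θ : ℝ} (hθ : 0 < θ) {s : ℂ} (hs1 : 0 < s.re) (hs2 : s.re < 2*θ) :
    mellin (fun x : ℝ => ((1:ℂ)+x)^(-(2*(θ:ℂ)))) s
      = Complex.betaIntegral s (2*(θ:ℂ) - s) := by
  rw [mellin, ← phi0_image, integral_image_eq_integral_abs_deriv_smul
    measurableSet_Ioo phi0_deriv phi0_inj]
  rw [setIntegral_congr_fun measurableSet_Ioo (key_fun_eq θ s)]
  rw [Complex.betaIntegral, intervalIntegral.integral_of_le zero_le_one,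
    integral_Ioc_eq_integral_Ioo]

lemma GammaC_ne {θ : ℝ} (hθ : 0 < θ) : Complex.Gamma (2*(θ:ℂ)) ≠ 0 := by
  rw [show (2*(θ:ℂ)) = ((2*θ : ℝ):ℂ) by push_cast; ring, Complex.Gamma_ofReal]
  exact_mod_cast (Real.Gamma_pos_of_pos (by linarith)).ne'

lemma mellin_val_line {θ : ℝ} (hθ : 0 < θ) (y : ℝ) :
    mellin (fun x : ℝ => ((1:ℂ)+x)^(-(2*(θ:ℂ)))) ((θ:ℂ) + y * I)
      = Complex.Gamma ((θ:ℂ) + y * I) * Complex.Gamma ((θ:ℂ) - y * I)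
        / Complex.Gamma (2*(θ:ℂ)) := by
  have hre : ((θ:ℂ) + y * I).re = θ := by simp
  have hs1 : 0 < ((θ:ℂ) + y * I).re := by rw [hre]; exact hθ
  have hs2 : ((θ:ℂ) + y * I).re < 2*θ := by rw [hre]; linarith
  rw [mellin_val hθ hs1 hs2]
  have hsub : 2*(θ:ℂ) - ((θ:ℂ) + y * I) = (θ:ℂ) - y * I := by ring
  have hB := Complex.Gamma_mul_Gamma_eq_betaIntegral (s := (θ:ℂ) + y * I)
    (t := (θ:ℂ) - y * I) hs1 (by simp [Complex.sub_re]; exact hθ)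
  rw [show (θ:ℂ) + y * I + ((θ:ℂ) - y * I) = 2*(θ:ℂ) by ring] at hB
  rw [hsub, eq_div_iff (GammaC_ne hθ), hB]
  ring

/-- A special case of Barnes's integral for the hypergeometric function `₂F₁`
(the inverse Mellin transform of the Euler beta function): for real `μ ≠ 0`
and real `θ > 0`,
`∫_ℝ Γ(θ+iz) Γ(θ−iz) |μ|^(−(θ+iz)) dz = 2π Γ(2θ) (1+|μ|)^(−2θ)`. -/
theorem barnes_2F1_special (μ θ : ℝ) (hμ : μ ≠ 0) (hθ : 0 < θ) :
    ∫ z : ℝ,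
        Complex.Gamma ((θ : ℂ) + Complex.I * (z : ℂ)) *
          Complex.Gamma ((θ : ℂ) - Complex.I * (z : ℂ)) *
          ((|μ| : ℝ) : ℂ) ^ (-((θ : ℂ) + Complex.I * (z : ℂ)))
      = 2 * (Real.pi : ℂ) * Complex.Gamma (2 * (θ : ℂ)) *
          (((1 + |μ| : ℝ)) : ℂ) ^ (-(2 * (θ : ℂ))) := by
  have hx : 0 < |μ| := abs_pos.mpr hμ
  have hcont : ContinuousAt (fun x : ℝ => ((1:ℂ)+x)^(-(2*(θ:ℂ)))) |μ| := by
    have h1 : ContinuousAt (fun w : ℂ => w ^ (-(2*(θ:ℂ)))) ((1:ℂ) + (|μ|:ℝ)) := by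
      apply continuousAt_cpow_const
      rw [Complex.mem_slitPlane_iff]
      left
      simp
      linarith
    have h0 : ContinuousAt (fun x : ℝ => (1:ℂ) + (x:ℂ)) |μ| := by fun_prop
    show ContinuousAt ((fun w : ℂ => w ^ (-(2*(θ:ℂ)))) ∘ (fun x : ℝ => (1:ℂ) + (x:ℂ))) |μ|
    exact ContinuousAt.comp (x := |μ|) h1 h0
  have hvert : Complex.VerticalIntegrable
      (mellin (fun x : ℝ => ((1:ℂ)+x)^(-(2*(θ:ℂ))))) θ := by
    refine ((gamma_decay hθ).div_const (Complex.Gamma (2*(θ:ℂ)))).congr ?_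
    exact Filter.Eventually.of_forall fun y => (mellin_val_line hθ y).symm
  have hinv := mellinInv_mellin_eq θ (fun x : ℝ => ((1:ℂ)+x)^(-(2*(θ:ℂ)))) hx
    (mellin_conv hθ) hvert hcont
  rw [mellinInv] at hinv
  have h2 : (∫ y : ℝ, ((|μ|:ℝ):ℂ)^(-((θ:ℂ) + y * I)) •
        mellin (fun x : ℝ => ((1:ℂ)+x)^(-(2*(θ:ℂ)))) ((θ:ℂ) + y * I))
      = (2*Real.pi : ℝ) • ((1:ℂ) + (|μ|:ℝ))^(-(2*(θ:ℂ))) := by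
    beta_reduce at hinv
    rw [← hinv, smul_smul, mul_one_div, div_self (by positivity : (2*Real.pi) ≠ 0), one_smul]
  calc ∫ z : ℝ, Complex.Gamma ((θ : ℂ) + Complex.I * (z : ℂ)) *
          Complex.Gamma ((θ : ℂ) - Complex.I * (z : ℂ)) *
          ((|μ| : ℝ) : ℂ) ^ (-((θ : ℂ) + Complex.I * (z : ℂ)))
      = ∫ z : ℝ, Complex.Gamma (2*(θ:ℂ)) * (((|μ|:ℝ):ℂ)^(-((θ:ℂ) + z * I)) •
          mellin (fun x : ℝ => ((1:ℂ)+x)^(-(2*(θ:ℂ)))) ((θ:ℂ) + z * I)) := by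
        congr 1
        funext z
        rw [mellin_val_line hθ z]
        simp only [smul_eq_mul, mul_comm Complex.I (z:ℂ)]
        field_simp [GammaC_ne hθ]
        have hG : Complex.Gamma ((θ:ℂ)*2) ≠ 0 := by rw [mul_comm]; exact GammaC_ne hθ
        rw [mul_div_cancel_right₀ _ hG]
    _ = Complex.Gamma (2*(θ:ℂ)) * ∫ z : ℝ, (((|μ|:ℝ):ℂ)^(-((θ:ℂ) + z * I)) •
          mellin (fun x : ℝ => ((1:ℂ)+x)^(-(2*(θ:ℂ)))) ((θ:ℂ) + z * I)) :=
        integral_const_mul _ _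
    _ = Complex.Gamma (2*(θ:ℂ)) * ((2*Real.pi : ℝ) • ((1:ℂ) + (|μ|:ℝ))^(-(2*(θ:ℂ)))) := by
        rw [h2]
    _ = 2 * (Real.pi : ℂ) * Complex.Gamma (2 * (θ : ℂ)) *
          (((1 + |μ| : ℝ)) : ℂ) ^ (-(2 * (θ : ℂ))) := by
        rw [show (((1 + |μ| : ℝ)) : ℂ) = (1:ℂ) + (|μ|:ℝ) by push_cast; ring,
          Complex.real_smul]
        push_cast
        ring
end

section
/- (Barnes's first lemma, symmetric special case.) Let a, b, c, d be complex numbers with positive real parts. Then (1/2π)·∫_ℝ Γ(a+is)Γ(b+is)Γ(c−is)Γ(d−is) ds = Γ(a+c)Γ(a+d)Γ(b+c)Γ(b+d)/Γ(a+b+c+d). -/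
open MeasureTheory Complex Real Set
open scoped Real FourierTransform

noncomputable section BarnesAux

namespace BarnesAux

/-- The kernel function `e^{px} (1+e^x)^{-(p+q)}`, written via `exp`. -/
def G (p q : ℂ) (x : ℝ) : ℂ :=
  Complex.exp (p * x - (p + q) * Real.log (1 + Real.exp x))

/-- The logistic function. -/
def σ (x : ℝ) : ℝ := Real.exp x / (1 + Real.exp x)

lemma one_add_exp_pos (x : ℝ) : 0 < 1 + Real.exp x := by positivity

lemma sigma_mem (x : ℝ) : σ x ∈ Ioo (0:ℝ) 1 := by
  constructor
  · exact div_pos (Real.exp_pos x) (one_add_exp_pos x)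
  · rw [σ, div_lt_one (one_add_exp_pos x)]; linarith

lemma one_sub_sigma (x : ℝ) : 1 - σ x = 1 / (1 + Real.exp x) := by
  have h := (one_add_exp_pos x).ne'
  simp only [σ]
  field_simp
  ring

lemma hasDerivAt_sigma (x : ℝ) :
    HasDerivAt σ (Real.exp x / (1 + Real.exp x) ^ 2) x := by
  have h1 : HasDerivAt (fun x : ℝ => 1 + Real.exp x) (Real.exp x) x :=
    (Real.hasDerivAt_exp x).const_add 1
  have h := (Real.hasDerivAt_exp x).div h1 (one_add_exp_pos x).ne'
  exact h.congr_deriv (by ring)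

lemma sigma_strictMono : StrictMono σ := by
  intro x y hxy
  have hx := one_add_exp_pos x
  have hy := one_add_exp_pos y
  rw [σ, σ, div_lt_div_iff₀ hx hy]
  have := Real.exp_lt_exp.2 hxy
  nlinarith
lemma sigma_surj : range σ = Ioo (0:ℝ) 1 := by
  apply Subset.antisymm
  · rintro _ ⟨x, rfl⟩; exact sigma_mem x
  · rintro y ⟨hy0, hy1⟩
    refine ⟨Real.log (y / (1 - y)), ?_⟩
    have h1 : (0:ℝ) < 1 - y := by linarith
    have h2 : 0 < y / (1 - y) := div_pos hy0 h1
    rw [σ, Real.exp_log h2]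
    field_simp
    ring

end BarnesAux

namespace BarnesAux

lemma cpow_pos_eq {r : ℝ} (hr : 0 < r) (z : ℂ) :
    (r : ℂ) ^ z = Complex.exp (↑(Real.log r) * z) := by
  rw [Complex.cpow_def_of_ne_zero (by exact_mod_cast hr.ne'), Complex.ofReal_log hr.le]

lemma key_pointwise (p q : ℂ) (x : ℝ) :
    |Real.exp x / (1 + Real.exp x) ^ 2| •
      ((↑(σ x) : ℂ) ^ (p - 1) * ((1:ℂ) - ↑(σ x)) ^ (q - 1)) = G p q x := by
  have h1 := one_add_exp_pos x
  have hs := sigma_mem x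
  have hlog1 : Real.log (σ x) = x - Real.log (1 + Real.exp x) := by
    rw [σ, Real.log_div (Real.exp_ne_zero x) h1.ne', Real.log_exp]
  have hlog2 : Real.log (1 - σ x) = -Real.log (1 + Real.exp x) := by
    rw [one_sub_sigma, one_div, Real.log_inv]
  have habs : |Real.exp x / (1 + Real.exp x) ^ 2|
      = Real.exp (x - 2 * Real.log (1 + Real.exp x)) := by
    rw [abs_of_pos (by positivity)]
    rw [Real.exp_sub, show (2:ℝ) * Real.log (1 + Real.exp x)
        = Real.log ((1 + Real.exp x) ^ 2) by rw [Real.log_pow]; push_cast; ring,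
      Real.exp_log (by positivity)]
  have h2 : ((1:ℂ) - ↑(σ x)) = ((1 - σ x : ℝ) : ℂ) := by push_cast; ring
  rw [habs, h2, cpow_pos_eq hs.1, cpow_pos_eq (by linarith [hs.2] : (0:ℝ) < 1 - σ x),
    hlog1, hlog2, real_smul, Complex.ofReal_exp, G, ← Complex.exp_add, ← Complex.exp_add]
  congr 1
  push_cast
  ring

lemma integral_Ioo_beta (p q : ℂ) (hp : 0 < p.re) (hq : 0 < q.re) :
    ∫ t in Ioo (0:ℝ) 1, ((t:ℂ) ^ (p - 1) * ((1:ℂ) - ↑t) ^ (q - 1))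
      = Complex.Gamma p * Complex.Gamma q / Complex.Gamma (p + q) := by
  have hβ := Complex.Gamma_mul_Gamma_eq_betaIntegral hp hq
  have hne : Complex.Gamma (p + q) ≠ 0 :=
    Complex.Gamma_ne_zero_of_re_pos (by simp only [Complex.add_re]; linarith)
  have : Complex.betaIntegral p q
      = ∫ t in Ioo (0:ℝ) 1, ((t:ℂ) ^ (p - 1) * ((1:ℂ) - ↑t) ^ (q - 1)) := by
    rw [Complex.betaIntegral, intervalIntegral.integral_of_le zero_le_one,
      integral_Ioc_eq_integral_Ioo]
  rw [← this, hβ]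
  rw [mul_comm, mul_div_assoc, div_self hne, mul_one]

lemma integral_G (p q : ℂ) (hp : 0 < p.re) (hq : 0 < q.re) :
    ∫ x : ℝ, G p q x = Complex.Gamma p * Complex.Gamma q / Complex.Gamma (p + q) := by
  have hder : ∀ x ∈ (univ : Set ℝ),
      HasDerivWithinAt σ (Real.exp x / (1 + Real.exp x) ^ 2) univ x :=
    fun x _ => (hasDerivAt_sigma x).hasDerivWithinAt
  have hinj : InjOn σ univ := sigma_strictMono.injective.injOn
  have h := integral_image_eq_integral_abs_deriv_smul MeasurableSet.univ hder hinj
    (fun t : ℝ => (t:ℂ) ^ (p - 1) * ((1:ℂ) - ↑t) ^ (q - 1))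
  rw [image_univ, sigma_surj, integral_Ioo_beta p q hp hq] at h
  rw [h, Measure.restrict_univ]
  exact integral_congr_ae (Filter.Eventually.of_forall fun x => (key_pointwise p q x).symm)

lemma integrable_G (p q : ℂ) (hp : 0 < p.re) (hq : 0 < q.re) :
    Integrable (G p q) := by
  have hder : ∀ x ∈ (univ : Set ℝ),
      HasDerivWithinAt σ (Real.exp x / (1 + Real.exp x) ^ 2) univ x :=
    fun x _ => (hasDerivAt_sigma x).hasDerivWithinAt
  have hinj : InjOn σ univ := sigma_strictMono.injective.injOn
  have h := integrableOn_image_iff_integrableOn_abs_deriv_smul MeasurableSet.univ hder hinj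
    (fun t : ℝ => (t:ℂ) ^ (p - 1) * ((1:ℂ) - ↑t) ^ (q - 1))
  rw [image_univ, sigma_surj] at h
  have hbeta : IntegrableOn (fun t : ℝ => (t:ℂ) ^ (p - 1) * ((1:ℂ) - ↑t) ^ (q - 1))
      (Ioo (0:ℝ) 1) := by
    have := (Complex.betaIntegral_convergent hp hq)
    rw [intervalIntegrable_iff_integrableOn_Ioc_of_le zero_le_one] at this
    exact this.mono_set Ioo_subset_Ioc_self
  have h2 := h.1 hbeta
  rw [integrableOn_univ] at h2
  exact h2.congr (Filter.Eventually.of_forall fun x => key_pointwise p q x)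

end BarnesAux

namespace BarnesAux

lemma continuous_G (p q : ℂ) : Continuous (G p q) := by
  apply Complex.continuous_exp.comp
  apply Continuous.sub
  · exact continuous_const.mul Complex.continuous_ofReal
  · exact continuous_const.mul (Complex.continuous_ofReal.comp
      ((continuous_const.add Real.continuous_exp).log fun x => (one_add_exp_pos x).ne'))

lemma exp_div_mul_G (p q : ℂ) (x : ℝ) :
    ↑(Real.exp x / (1 + Real.exp x)) * G p q x = G (p + 1) q x := by
  have h1 := one_add_exp_pos x
  have : (Real.exp x / (1 + Real.exp x)) = Real.exp (x - Real.log (1 + Real.exp x)) := by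
    rw [Real.exp_sub, Real.exp_log h1]
  rw [this, Complex.ofReal_exp, G, G, ← Complex.exp_add]
  congr 1
  push_cast
  ring

lemma hasDerivAt_G (p q : ℂ) (x : ℝ) :
    HasDerivAt (G p q) (p * G p q x - (p + q) * G (p + 1) q x) x := by
  have h1 : HasDerivAt (fun x : ℝ => ((x : ℂ))) 1 x := by
    simpa using (hasDerivAt_id x).ofReal_comp
  have h2 : HasDerivAt (fun x : ℝ => Real.log (1 + Real.exp x))
      (Real.exp x / (1 + Real.exp x)) x := by
    have := ((Real.hasDerivAt_exp x).const_add 1).log (one_add_exp_pos x).ne'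
    simpa using this
  have hE : HasDerivAt (fun x : ℝ => p * (x : ℂ) - (p + q) * ↑(Real.log (1 + Real.exp x)))
      (p - (p + q) * ↑(Real.exp x / (1 + Real.exp x))) x := by
    simpa [mul_one, Pi.sub_def] using (h1.const_mul p).sub (h2.ofReal_comp.const_mul (p + q))
  have h := hE.cexp
  convert h using 1
  · rfl
  rw [show Complex.exp (p * ↑x - (p + q) * ↑(Real.log (1 + Real.exp x))) = G p q x from rfl]
  rw [mul_sub, mul_comm]
  congr 1
  rw [← exp_div_mul_G p q x]
  ring

lemma differentiable_G (p q : ℂ) : Differentiable ℝ (G p q) :=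
  fun x => (hasDerivAt_G p q x).differentiableAt

lemma deriv_G (p q : ℂ) :
    deriv (G p q) = fun x => p * G p q x - (p + q) * G (p + 1) q x :=
  funext fun x => (hasDerivAt_G p q x).deriv

lemma integrable_deriv_G (p q : ℂ) (hp : 0 < p.re) (hq : 0 < q.re) :
    Integrable (deriv (G p q)) := by
  rw [deriv_G]
  have h1 : (0:ℝ) < (p + 1).re := by simp [Complex.add_re]; linarith
  exact ((integrable_G p q hp hq).const_mul p).sub
    ((integrable_G (p + 1) q (by simpa using h1) hq).const_mul (p + q))

lemma hasDerivAt_deriv_G (p q : ℂ) (x : ℝ) :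
    HasDerivAt (fun x => p * G p q x - (p + q) * G (p + 1) q x)
      (p * (p * G p q x - (p + q) * G (p + 1) q x)
        - (p + q) * ((p + 1) * G (p + 1) q x - (p + 1 + q) * G (p + 2) q x)) x := by
  have h1 := (hasDerivAt_G p q x).const_mul p
  have h2 := (hasDerivAt_G (p + 1) q x).const_mul (p + q)
  have := h1.sub h2
  refine this.congr_deriv ?_
  ring_nf

end BarnesAux

namespace BarnesAux

lemma re_add_one_pos {p : ℂ} (hp : 0 < p.re) : 0 < (p + 1).re := by
  simp only [Complex.add_re, Complex.one_re]; linarith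

lemma fourier_G (p q : ℂ) (hp : 0 < p.re) (hq : 0 < q.re) (w : ℝ) :
    𝓕 (G p q) w = Complex.Gamma (p - ((2 * Real.pi * w : ℝ) : ℂ) * Complex.I) *
      Complex.Gamma (q + ((2 * Real.pi * w : ℝ) : ℂ) * Complex.I) / Complex.Gamma (p + q) := by
  set P := p - ((2 * Real.pi * w : ℝ) : ℂ) * Complex.I with hPdef
  set Q := q + ((2 * Real.pi * w : ℝ) : ℂ) * Complex.I with hQdef
  have hP : 0 < P.re := by
    rw [hPdef]; simp [Complex.sub_re, Complex.mul_re]; exact hp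
  have hQ : 0 < Q.re := by
    rw [hQdef]; simp [Complex.add_re, Complex.mul_re]; exact hq
  have hPQ : P + Q = p + q := by rw [hPdef, hQdef]; ring
  have key : ∀ v : ℝ, Complex.exp (↑(-2 * Real.pi * v * w) * Complex.I) • G p q v
      = G P Q v := by
    intro v
    rw [smul_eq_mul, G, G, ← Complex.exp_add]
    congr 1
    rw [hPdef, hPQ]
    push_cast
    ring
  rw [Real.fourier_real_eq_integral_exp_smul,
    integral_congr_ae (Filter.Eventually.of_forall key), integral_G P Q hP hQ, hPQ]

lemma integrable_deriv2_G (p q : ℂ) (hp : 0 < p.re) (hq : 0 < q.re) :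
    Integrable (deriv (deriv (G p q))) := by
  rw [deriv_G]
  have : deriv (fun x => p * G p q x - (p + q) * G (p + 1) q x)
      = fun x => (p * (p * G p q x - (p + q) * G (p + 1) q x)
        - (p + q) * ((p + 1) * G (p + 1) q x - (p + 1 + q) * G (p + 2) q x)) :=
    funext fun x => (hasDerivAt_deriv_G p q x).deriv
  rw [this]
  have i0 := integrable_G p q hp hq
  have i1 := integrable_G (p + 1) q (re_add_one_pos hp) hq
  have i2 := integrable_G (p + 2) q (by
    have := re_add_one_pos (re_add_one_pos hp)
    rwa [show p + 1 + 1 = p + 2 by ring] at this) hq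
  exact (((i0.const_mul p).sub (i1.const_mul (p + q))).const_mul p).sub
    (((i1.const_mul (p + 1)).sub (i2.const_mul (p + 1 + q))).const_mul (p + q))

lemma norm_fourier_G_le (p q : ℂ) (hp : 0 < p.re) (hq : 0 < q.re) :
    ∃ C : ℝ, ∀ ξ : ℝ, ‖𝓕 (G p q) ξ‖ ≤ C * (1 + ξ ^ 2)⁻¹ := by
  set f := G p q with hf
  have hint := integrable_G p q hp hq
  have hd1 : 𝓕 (deriv f) = fun ξ : ℝ => (2 * ↑Real.pi * Complex.I * ↑ξ) • 𝓕 f ξ :=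
    Real.fourier_deriv hint (differentiable_G p q) (integrable_deriv_G p q hp hq)
  have hdd : Differentiable ℝ (deriv f) := by
    rw [hf, deriv_G]
    exact fun x => (hasDerivAt_deriv_G p q x).differentiableAt
  have hd2 : 𝓕 (deriv (deriv f)) = fun ξ : ℝ => (2 * ↑Real.pi * Complex.I * ↑ξ) • 𝓕 (deriv f) ξ :=
    Real.fourier_deriv (integrable_deriv_G p q hp hq) hdd (integrable_deriv2_G p q hp hq)
  set C := (∫ x, ‖f x‖) + ∫ x, ‖deriv (deriv f) x‖ with hC
  refine ⟨C, fun ξ => ?_⟩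
  have key : ((1 : ℂ) + 4 * Real.pi ^ 2 * ξ ^ 2) * 𝓕 f ξ = 𝓕 f ξ - 𝓕 (deriv (deriv f)) ξ := by
    rw [hd2, hd1]
    simp only [smul_eq_mul]
    ring_nf
    rw [Complex.I_sq]
    ring
  have hb1 : ‖𝓕 f ξ‖ ≤ ∫ x, ‖f x‖ :=
    VectorFourier.norm_fourierIntegral_le_integral_norm _ _ _ _ _
  have hb2 : ‖𝓕 (deriv (deriv f)) ξ‖ ≤ ∫ x, ‖deriv (deriv f) x‖ :=
    VectorFourier.norm_fourierIntegral_le_integral_norm _ _ _ _ _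
  have hnorm : (1 + 4 * Real.pi ^ 2 * ξ ^ 2) * ‖𝓕 f ξ‖ ≤ C := by
    have h1 : ‖((1 : ℂ) + 4 * Real.pi ^ 2 * ξ ^ 2) * 𝓕 f ξ‖
        = (1 + 4 * Real.pi ^ 2 * ξ ^ 2) * ‖𝓕 f ξ‖ := by
      rw [norm_mul]
      congr 1
      rw [show ((1 : ℂ) + 4 * Real.pi ^ 2 * ξ ^ 2) = (((1 + 4 * Real.pi ^ 2 * ξ ^ 2 : ℝ)) : ℂ) by
        push_cast; ring, Complex.norm_real, Real.norm_eq_abs, abs_of_pos (by positivity)]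
    calc (1 + 4 * Real.pi ^ 2 * ξ ^ 2) * ‖𝓕 f ξ‖ = ‖𝓕 f ξ - 𝓕 (deriv (deriv f)) ξ‖ := by
          rw [← h1, key]
      _ ≤ ‖𝓕 f ξ‖ + ‖𝓕 (deriv (deriv f)) ξ‖ := norm_sub_le _ _
      _ ≤ C := add_le_add hb1 hb2
  have hπ : (1 : ℝ) ≤ 4 * Real.pi ^ 2 := by nlinarith [Real.pi_gt_three]
  have h2 : (1 + ξ ^ 2) * ‖𝓕 f ξ‖ ≤ C := by
    refine le_trans ?_ hnorm
    have h3 : (0:ℝ) ≤ ‖𝓕 f ξ‖ := norm_nonneg _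
    nlinarith [mul_nonneg (mul_nonneg (sub_nonneg.2 hπ) (sq_nonneg ξ)) h3]
  have hpos : (0:ℝ) < 1 + ξ ^ 2 := by positivity
  rw [← div_eq_mul_inv, le_div_iff₀ hpos, mul_comm]
  exact h2

end BarnesAux

namespace BarnesAux

lemma continuous_fourier_G (p q : ℂ) (hp : 0 < p.re) (hq : 0 < q.re) :
    Continuous (𝓕 (G p q)) :=
  VectorFourier.fourierIntegral_continuous Real.continuous_fourierChar
    (by exact continuous_inner) (integrable_G p q hp hq)

lemma integrable_fourier_G (p q : ℂ) (hp : 0 < p.re) (hq : 0 < q.re) :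
    Integrable (𝓕 (G p q)) := by
  obtain ⟨C, hC⟩ := norm_fourier_G_le p q hp hq
  exact (integrable_inv_one_add_sq.const_mul C).mono'
    (continuous_fourier_G p q hp hq).aestronglyMeasurable (Filter.Eventually.of_forall hC)

lemma fourier_fourier_G (p q : ℂ) (hp : 0 < p.re) (hq : 0 < q.re) (x : ℝ) :
    𝓕 (𝓕 (G p q)) x = G p q (-x) := by
  have h := Continuous.fourierInv_fourier_eq (continuous_G p q) (integrable_G p q hp hq)
    (integrable_fourier_G p q hp hq)
  have h2 := Real.fourierInv_eq_fourier_neg (𝓕 (G p q)) (-x)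
  rw [neg_neg, h] at h2
  rw [← h2]

lemma flip_formula (f g : ℝ → ℂ) (hf : Integrable f) (hg : Integrable g) :
    ∫ ξ, 𝓕 f ξ * g ξ = ∫ x, f x * 𝓕 g x := by
  have hL : (innerₗ ℝ).flip = innerₗ ℝ := by
    apply LinearMap.ext; intro x; apply LinearMap.ext; intro y
    exact real_inner_comm x y
  have := VectorFourier.integral_fourierIntegral_smul_eq_flip
    (e := Real.fourierChar) (μ := (volume : Measure ℝ)) (ν := (volume : Measure ℝ))
    (L := innerₗ ℝ) Real.continuous_fourierChar (by exact continuous_inner) hf hg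
  rw [hL] at this
  simp only [smul_eq_mul] at this
  exact this

lemma log_one_add_exp_neg (x : ℝ) :
    Real.log (1 + Real.exp (-x)) = Real.log (1 + Real.exp x) - x := by
  have h : 1 + Real.exp (-x) = (1 + Real.exp x) * Real.exp (-x) := by
    rw [mul_comm, mul_add, mul_one, ← Real.exp_add]
    simp [add_comm]
  rw [h, Real.log_mul (one_add_exp_pos x).ne' (Real.exp_ne_zero _), Real.log_exp]
  ring

lemma G_mul_G_neg (p q r s : ℂ) (x : ℝ) :
    G p q x * G r s (-x) = G (p + s) (q + r) x := by
  rw [G, G, G, ← Complex.exp_add, log_one_add_exp_neg]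
  congr 1
  push_cast
  ring

end BarnesAux

end BarnesAux

open BarnesAux in
/-- Barnes's first lemma (symmetric special case): for complex `a, b, c, d`
with positive real parts,
`(1/2π) ∫_ℝ Γ(a+is) Γ(b+is) Γ(c−is) Γ(d−is) ds
  = Γ(a+c) Γ(a+d) Γ(b+c) Γ(b+d) / Γ(a+b+c+d)`. -/
theorem barnes_first_lemma (a b c d : ℂ)
    (ha : 0 < a.re) (hb : 0 < b.re) (hc : 0 < c.re) (hd : 0 < d.re) :
    (1 / (2 * (Real.pi : ℂ))) *
        ∫ s : ℝ,
          Complex.Gamma (a + Complex.I * (s : ℂ)) *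
            Complex.Gamma (b + Complex.I * (s : ℂ)) *
            Complex.Gamma (c - Complex.I * (s : ℂ)) *
            Complex.Gamma (d - Complex.I * (s : ℂ))
      = Complex.Gamma (a + c) * Complex.Gamma (a + d) * Complex.Gamma (b + c) *
          Complex.Gamma (b + d) / Complex.Gamma (a + b + c + d) := by
  set H : ℝ → ℂ := fun s =>
    Complex.Gamma (a + Complex.I * (s : ℂ)) * Complex.Gamma (b + Complex.I * (s : ℂ)) *
      Complex.Gamma (c - Complex.I * (s : ℂ)) * Complex.Gamma (d - Complex.I * (s : ℂ)) with hH
  set f := G c a with hfdef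
  set g := G d b with hgdef
  have hΓac : Complex.Gamma (a + c) ≠ 0 :=
    Complex.Gamma_ne_zero_of_re_pos (by simp only [Complex.add_re]; linarith)
  have hΓbd : Complex.Gamma (b + d) ≠ 0 :=
    Complex.Gamma_ne_zero_of_re_pos (by simp only [Complex.add_re]; linarith)
  -- Fourier transforms
  have hfour : ∀ ξ : ℝ, H (2 * Real.pi * ξ)
      = Complex.Gamma (a + c) * Complex.Gamma (b + d) * (𝓕 f ξ * 𝓕 g ξ) := by
    intro ξ
    rw [hH, hfdef, hgdef]
    simp only []
    rw [fourier_G c a hc ha ξ, fourier_G d b hd hb ξ]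
    rw [show c + a = a + c from add_comm c a, show d + b = b + d from add_comm d b]
    field_simp
  -- the inner integral via flip + inversion
  have hinner : ∫ ξ : ℝ, 𝓕 f ξ * 𝓕 g ξ
      = Complex.Gamma (c + b) * Complex.Gamma (a + d) / Complex.Gamma (c + b + (a + d)) := by
    rw [flip_formula f (𝓕 g) (integrable_G c a hc ha) (integrable_fourier_G d b hd hb)]
    have : ∀ x : ℝ, f x * 𝓕 (𝓕 g) x = G (c + b) (a + d) x := by
      intro x
      rw [hgdef, fourier_fourier_G d b hd hb x, hfdef, G_mul_G_neg]
    rw [integral_congr_ae (Filter.Eventually.of_forall this)]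
    exact integral_G (c + b) (a + d)
      (by simp only [Complex.add_re]; linarith) (by simp only [Complex.add_re]; linarith)
  -- scaling substitution
  have hA : ∫ x : ℝ, H (2 * Real.pi * x) = (((2 * Real.pi)⁻¹ : ℝ) : ℂ) * ∫ s : ℝ, H s := by
    have h0 := MeasureTheory.Measure.integral_comp_mul_left H (2 * Real.pi)
    rwa [abs_of_pos (by positivity), real_smul] at h0
  have hcm : ∫ ξ : ℝ, H (2 * Real.pi * ξ)
      = Complex.Gamma (a + c) * Complex.Gamma (b + d) * ∫ ξ : ℝ, 𝓕 f ξ * 𝓕 g ξ := by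
    rw [integral_congr_ae (Filter.Eventually.of_forall hfour)]
    exact MeasureTheory.integral_const_mul _ _
  have hπ : ((2 * Real.pi : ℝ) : ℂ) ≠ 0 := by
    push_cast
    simp [Real.pi_ne_zero]
  have hfinal : ∫ s : ℝ, H s = (((2 * Real.pi : ℝ)) : ℂ) *
      (Complex.Gamma (a + c) * Complex.Gamma (b + d) *
        (Complex.Gamma (c + b) * Complex.Gamma (a + d) / Complex.Gamma (c + b + (a + d)))) := by
    rw [← hinner, ← hcm, hA]
    rw [← mul_assoc, ← Complex.ofReal_mul]
    rw [show (2 * Real.pi) * (2 * Real.pi)⁻¹ = 1 by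
      field_simp]
    simp
  rw [hfinal, show c + b + (a + d) = a + b + c + d by ring]
  rw [show b + c = c + b from add_comm b c]
  push_cast
  have hπ' : (Real.pi : ℂ) ≠ 0 := by exact_mod_cast Real.pi_ne_zero
  field_simp
end

section
/- (Three-leg to quad correspondence for Q3(δ=0).) Let x₀,x₁,x₂,x₃, α₁,α₃ be complex numbers, and set X = e^(x₀), U = e^(x₁), Y = e^(x₂), V = e^(x₃), a = e^(−iα₁), b = −e^(−i(α₁+α₃)). Suppose the multiplicative three-leg relation [(1+e^(x₁−x₀+i(π−α₁)))/(1+e^(x₀−x₁+i(π−α₁)))·e^(x₀−x₁)] · [(1+e^(x₂−x₀+i(α₁+α₃)))/(1+e^(x₀−x₂+i(α₁+α₃)))·e^(x₀−x₂)] · [(1+e^(x₃−x₀+i(π−α₃)))/(1+e^(x₀−x₃+i(π−α₃)))·e^(x₀−x₃)] = 1 holds (with all denominators nonzero). Then (a²−1)b(−XU+YV) − (b²−1)a(−XY+UV) + (a²−b²)(−XV+UY) = 0, i.e. Q3(δ=0) holds at (x,u,y,v;α,β) = (−X,U,Y,V;a,b). -/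
/-! Each leg factor is a Möbius-type ratio in the exponentiated spins: with `P = e^x`, `Q = e^y`
and `c = e^{iθ}`, `(1 + e^{y-x+iθ}) / (1 + e^{x-y+iθ}) · e^{x-y} = (P + cQ) / (Q + cP)`.
For the three legs the constants `c` are `-a`, `-1/b` and `b/a`, and clearing denominators in
the product relation leaves `X · Q(-X, U, Y, V; a, b) = 0` with `X = e^{x₀} ≠ 0`. -/

open Complex

def q3DeltaZero {K : Type*} [Field K] (α β x u y v : K) : K :=
  (α ^ 2 - 1) * β * (x * u + y * v) - (β ^ 2 - 1) * α * (x * y + u * v)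
    + (α ^ 2 - β ^ 2) * (x * v + u * y)

def legRatio {K : Type*} [Field K] (c P Q : K) : K := (P + c * Q) / (Q + c * P)

noncomputable def legFactor (θ x y : ℂ) : ℂ :=
  (1 + exp (y - x + I * θ)) / (1 + exp (x - y + I * θ)) * exp (x - y)

section Field

variable {K : Type*} [Field K]

theorem legRatio_eq {c P Q : K} (hP : P ≠ 0) (hQ : Q ≠ 0) :
    legRatio c P Q = (1 + c * Q / P) / (1 + c * P / Q) * (P / Q) := by
  rw [legRatio, one_add_div hP, one_add_div hQ, div_div_div_eq, div_mul_div_comm,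
    mul_right_comm, mul_comm P, mul_assoc, mul_assoc, mul_div_mul_right _ _ (mul_ne_zero hP hQ)]

theorem q3DeltaZero_eq_zero_of_legRatio {a b X U Y V : K} (ha : a ≠ 0) (hb : b ≠ 0) (hX : X ≠ 0)
    (hU : U + -a * X ≠ 0) (hY : Y + -(1 / b) * X ≠ 0) (hV : V + b / a * X ≠ 0)
    (h : legRatio (-a) X U * legRatio (-(1 / b)) X Y * legRatio (b / a) X V = 1) :
    q3DeltaZero a b (-X) U Y V = 0 := by
  unfold legRatio at h
  rw [div_mul_div_comm, div_mul_div_comm,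
    div_eq_one_iff_eq (mul_ne_zero (mul_ne_zero hU hY) hV)] at h
  field_simp at h
  apply mul_left_cancel₀ hX
  unfold q3DeltaZero
  linear_combination h

end Field

theorem exp_sub_add_mul_I (θ x y : ℂ) : exp (x - y + I * θ) = exp (I * θ) * exp x / exp y := by
  rw [exp_add, exp_sub]
  ring

theorem legFactor_eq_legRatio (θ x y : ℂ) :
    legFactor θ x y = legRatio (exp (I * θ)) (exp x) (exp y) := by
  rw [legRatio_eq (exp_ne_zero x) (exp_ne_zero y), legFactor, exp_sub_add_mul_I,
    exp_sub_add_mul_I, exp_sub]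

theorem exp_add_exp_mul_ne_zero {θ x y : ℂ} (h : 1 + exp (x - y + I * θ) ≠ 0) :
    exp y + exp (I * θ) * exp x ≠ 0 := by
  rw [exp_sub_add_mul_I, one_add_div (exp_ne_zero y)] at h
  exact fun h0 => h (by rw [h0, zero_div])

theorem exp_I_mul_pi_sub (α : ℂ) : exp (I * (Real.pi - α)) = -exp (-(I * α)) := by
  rw [mul_sub, sub_eq_add_neg, exp_add, mul_comm I, exp_pi_mul_I, neg_one_mul]

/-- Three-leg to quad correspondence for `Q3(δ=0)`: if the multiplicative
three-leg relation (the exponentiated saddle point equation of the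
Faddeev–Volkov star-triangle relation) holds, with all denominators nonzero,
then `Q3(δ=0)` holds at `(x,u,y,v;α,β) = (−X, U, Y, V; a, b)` where
`X = e^(x₀)`, `U = e^(x₁)`, `Y = e^(x₂)`, `V = e^(x₃)`,
`a = e^(−iα₁)`, `b = −e^(−i(α₁+α₃))`. -/
theorem threeLeg_Q3d0 (x₀ x₁ x₂ x₃ α₁ α₃ X U Y V a b : ℂ)
    (hX : X = Complex.exp x₀) (hU : U = Complex.exp x₁)
    (hY : Y = Complex.exp x₂) (hV : V = Complex.exp x₃)
    (ha : a = Complex.exp (-(Complex.I * α₁)))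
    (hb : b = -Complex.exp (-(Complex.I * (α₁ + α₃))))
    (d1 : 1 + Complex.exp (x₀ - x₁ + Complex.I * ((Real.pi : ℂ) - α₁)) ≠ 0)
    (d2 : 1 + Complex.exp (x₀ - x₂ + Complex.I * (α₁ + α₃)) ≠ 0)
    (d3 : 1 + Complex.exp (x₀ - x₃ + Complex.I * ((Real.pi : ℂ) - α₃)) ≠ 0)
    (h : ((1 + Complex.exp (x₁ - x₀ + Complex.I * ((Real.pi : ℂ) - α₁))) /
            (1 + Complex.exp (x₀ - x₁ + Complex.I * ((Real.pi : ℂ) - α₁))) *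
            Complex.exp (x₀ - x₁)) *
         ((1 + Complex.exp (x₂ - x₀ + Complex.I * (α₁ + α₃))) /
            (1 + Complex.exp (x₀ - x₂ + Complex.I * (α₁ + α₃))) *
            Complex.exp (x₀ - x₂)) *
         ((1 + Complex.exp (x₃ - x₀ + Complex.I * ((Real.pi : ℂ) - α₃))) /
            (1 + Complex.exp (x₀ - x₃ + Complex.I * ((Real.pi : ℂ) - α₃))) *
            Complex.exp (x₀ - x₃)) = 1) :
    (a ^ 2 - 1) * b * (-X * U + Y * V) - (b ^ 2 - 1) * a * (-X * Y + U * V)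
      + (a ^ 2 - b ^ 2) * (-X * V + U * Y) = 0 := by
  have ha0 : a ≠ 0 := ha ▸ exp_ne_zero _
  have hb0 : b ≠ 0 := hb ▸ neg_ne_zero.mpr (exp_ne_zero _)
  have c₁ : exp (I * (Real.pi - α₁)) = -a := by rw [exp_I_mul_pi_sub, ha]
  have c₂ : exp (I * (α₁ + α₃)) = -(1 / b) := by rw [hb, exp_neg]; field_simp
  have c₃ : exp (I * (Real.pi - α₃)) = b / a := by
    rw [exp_I_mul_pi_sub, ha, hb, neg_div, ← exp_sub]
    ring_nf
  change legFactor _ x₀ x₁ * legFactor _ x₀ x₂ * legFactor _ x₀ x₃ = 1 at h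
  rw [legFactor_eq_legRatio, legFactor_eq_legRatio, legFactor_eq_legRatio, c₁, c₂, c₃] at h
  subst hX hU hY hV
  exact q3DeltaZero_eq_zero_of_legRatio ha0 hb0 (exp_ne_zero x₀)
    (c₁ ▸ exp_add_exp_mul_ne_zero d1) (c₂ ▸ exp_add_exp_mul_ne_zero d2)
    (c₃ ▸ exp_add_exp_mul_ne_zero d3) h
end

section
/- (Three-leg to quad correspondence for H3(δ=0,ε=0).) Let x₀,x₁,x₂,x₃, α₁,α₃ be complex numbers with 1−e^(x₃−x₀−iα₃) ≠ 0 and 1−e^(x₀−x₃−iα₃) ≠ 0. If e^(x₁)·e^(−x₂)·[(1−e^(x₃−x₀−iα₃))/(1−e^(x₀−x₃−iα₃))]·e^(x₀−x₃) = 1, then with X = −e^(x₀), U = e^(x₁), Y = e^(x₂), V = e^(x₃), a = e^(−iα₁), b = −e^(−i(α₁+α₃)), the quad equation (UV+XY)b − (YV+XU)a = 0 holds. -/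
/-- Three-leg to quad correspondence for `H3(δ=0, ε=0)`: if the exponentiated
three-leg saddle point equation
`e^(x₁) e^(−x₂) (1−e^(x₃−x₀−iα₃))/(1−e^(x₀−x₃−iα₃)) e^(x₀−x₃) = 1`
holds (with nonzero denominators), then with `X = −e^(x₀)`, `U = e^(x₁)`,
`Y = e^(x₂)`, `V = e^(x₃)`, `a = e^(−iα₁)`, `b = −e^(−i(α₁+α₃))`,
the quad equation `(UV+XY)b − (YV+XU)a = 0` holds. -/
theorem threeLeg_H3d0e0 (x₀ x₁ x₂ x₃ α₁ α₃ X U Y V a b : ℂ)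
    (hX : X = -Complex.exp x₀) (hU : U = Complex.exp x₁)
    (hY : Y = Complex.exp x₂) (hV : V = Complex.exp x₃)
    (ha : a = Complex.exp (-(Complex.I * α₁)))
    (hb : b = -Complex.exp (-(Complex.I * (α₁ + α₃))))
    (d1 : 1 - Complex.exp (x₃ - x₀ - Complex.I * α₃) ≠ 0)
    (d2 : 1 - Complex.exp (x₀ - x₃ - Complex.I * α₃) ≠ 0)
    (h : Complex.exp x₁ * Complex.exp (-x₂) *
          ((1 - Complex.exp (x₃ - x₀ - Complex.I * α₃)) /
            (1 - Complex.exp (x₀ - x₃ - Complex.I * α₃))) *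
          Complex.exp (x₀ - x₃) = 1) :
    (U * V + X * Y) * b - (Y * V + X * U) * a = 0 := by
  subst hX hU hY hV ha hb
  set A := Complex.exp x₀ with hA
  set B := Complex.exp x₁ with hB
  set C := Complex.exp x₂ with hC
  set D := Complex.exp x₃ with hD
  set E := Complex.exp (Complex.I * α₃) with hE
  set F := Complex.exp (Complex.I * α₁) with hF
  have hA0 : A ≠ 0 := Complex.exp_ne_zero _
  have hB0 : B ≠ 0 := Complex.exp_ne_zero _
  have hC0 : C ≠ 0 := Complex.exp_ne_zero _
  have hD0 : D ≠ 0 := Complex.exp_ne_zero _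
  have hE0 : E ≠ 0 := Complex.exp_ne_zero _
  have hF0 : F ≠ 0 := Complex.exp_ne_zero _
  have hd : D * E - A ≠ 0 := by
    intro heq
    apply d2
    rw [show x₀ - x₃ - Complex.I * α₃ = x₀ - (x₃ + Complex.I * α₃) by ring,
      Complex.exp_sub, Complex.exp_add, ← hA, ← hD, ← hE]
    rw [sub_eq_zero] at heq
    rw [← heq, div_self (mul_ne_zero hD0 hE0), sub_self]
  simp only [Complex.exp_sub, Complex.exp_add, Complex.exp_neg, mul_add, neg_add,
    ← hA, ← hB, ← hC, ← hD, ← hE, ← hF] at h ⊢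
  field_simp [hA0, hB0, hC0, hD0, hE0, hF0, hd, d2] at h ⊢
  have hS : B * (A * E - D) - C * (D * E - A) = 0 := by
    apply mul_left_cancel₀ (mul_ne_zero (mul_ne_zero hA0 hD0) hE0)
    linear_combination (A * D * E) * h
  linear_combination hS
end
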